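/- For ν > 0 with |z| < 1, Euler's integral representation holds: ₂F₁(a, b, c; z) = Γ(c)/(Γ(b)Γ(c−b)) ∫₀¹ t^(b−1) (1−t)^(c−b−1) (1−zt)^(−a) dt, whenever Re(c) > Re(b) > 0. -/

import Mathlib

open Complex MeasureTheory intervalIntegral

/-- Pochhammer symbol `(s)_k` for complex `s`. -/
noncomputable def cpoch (s : ℂ) (k : ℕ) : ℂ := ∏ i ∈ Finset.range k, (s + i)

/-- Gauss hypergeometric function `₂F₁` (complex), defined by its power series. -/
noncomputable def hyp2F1 (a b c z : ℂ) : ℂ :=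
  ∑' n : ℕ, cpoch a n * cpoch b n / (cpoch c n * (n.factorial : ℂ)) * z ^ n

/-!
Expand `(1 - z t) ^ (-a)` by the binomial series `∑ (a)ₙ / n! (z t)ⁿ`, which converges absolutely
and uniformly for `t ∈ [0, 1]` because `‖z‖ < 1`, and integrate termwise against the Beta density
`t ^ (b - 1) (1 - t) ^ (c - b - 1)`. The `n`-th term is then `B(b + n, c - b)`, and
`Γ(s + n) = Γ(s) (s)ₙ` turns it into `B(b, c - b) (b)ₙ / (c)ₙ = Γ(b) Γ(c - b) / Γ(c) · (b)ₙ / (c)ₙ`.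
-/

open scoped Nat

lemma cpoch_eq_ascPochhammer_eval (s : ℂ) (n : ℕ) : cpoch s n = (ascPochhammer ℂ n).eval s := by
  induction n with
  | zero => simp [cpoch]
  | succ n ih => rw [cpoch, Finset.prod_range_succ, ← cpoch, ih, ascPochhammer_succ_eval]

lemma Gamma_add_nat_eq_Gamma_mul_cpoch {s : ℂ} (hs : ∀ k : ℕ, s ≠ -k) (n : ℕ) :
    Gamma (s + n) = Gamma s * cpoch s n := by
  rw [cpoch_eq_ascPochhammer_eval, ← Gamma_add_nat_div_Gamma_eq s hs,
    mul_div_cancel₀ _ (Gamma_ne_zero hs)]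

lemma choose_add_natCast_sub_one_eq_cpoch_div_factorial (a : ℂ) (n : ℕ) :
    Ring.choose (a + n - 1) n = cpoch a n / n ! := by
  rw [← Ring.multichoose_eq, eq_div_iff (by exact_mod_cast n.factorial_ne_zero), mul_comm,
    ← nsmul_eq_mul, Ring.factorial_nsmul_multichoose_eq_ascPochhammer,
    Polynomial.ascPochhammer_smeval_cast, Polynomial.ascPochhammer_smeval_eq_eval,
    cpoch_eq_ascPochhammer_eval]

theorem hasFPowerSeriesOnBall_one_sub_cpow_neg (a : ℂ) :
    HasFPowerSeriesOnBall (fun w ↦ (1 - w) ^ (-a))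
      (.ofScalars ℂ fun n ↦ cpoch a n / n !) 0 1 := by
  simpa [← choose_add_natCast_sub_one_eq_cpoch_div_factorial, cpow_neg] using
    one_div_one_sub_cpow_hasFPowerSeriesOnBall_zero a

lemma hasSum_cpoch_div_factorial_mul_pow {a w : ℂ} (hw : ‖w‖ < 1) :
    HasSum (fun n ↦ cpoch a n / n ! * w ^ n) ((1 - w) ^ (-a)) := by
  have := (hasFPowerSeriesOnBall_one_sub_cpow_neg a).hasSum (y := w) (by simpa [← ofReal_norm])
  simpa [FormalMultilinearSeries.ofScalars_apply_eq, mul_comm] using this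

lemma summable_norm_cpoch_div_factorial_mul_pow {a w : ℂ} (hw : ‖w‖ < 1) :
    Summable fun n ↦ ‖cpoch a n / n ! * w ^ n‖ := by
  have hw' : w ∈ Metric.eball (0 : ℂ) 1 := by simpa [← ofReal_norm]
  have := FormalMultilinearSeries.summable_norm_apply _
    (Metric.eball_subset_eball (hasFPowerSeriesOnBall_one_sub_cpow_neg a).r_le hw')
  simpa [FormalMultilinearSeries.ofScalars_apply_eq, mul_comm] using this

lemma ne_neg_natCast_of_re_pos {s : ℂ} (hs : 0 < s.re) (k : ℕ) : s ≠ -k := by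
  rintro rfl
  exact (Nat.cast_nonneg (α := ℝ) k).not_gt (by simpa using hs)

lemma betaIntegral_add_nat {u v : ℂ} (hu : 0 < u.re) (hv : 0 < v.re) (n : ℕ) :
    betaIntegral (u + n) v = Gamma u * Gamma v / Gamma (u + v) * (cpoch u n / cpoch (u + v) n) := by
  have huv : 0 < (u + v).re := by rw [add_re]; positivity
  have hun : 0 < (u + n).re := by rw [add_re, natCast_re]; positivity
  have hB := Gamma_mul_Gamma_eq_betaIntegral hun hv
  have hne : Gamma (u + v + n) ≠ 0 :=
    Gamma_ne_zero_of_re_pos (by rw [add_re, natCast_re]; positivity)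
  rw [add_right_comm] at hB
  rw [Gamma_add_nat_eq_Gamma_mul_cpoch (ne_neg_natCast_of_re_pos huv)] at hB hne
  rw [Gamma_add_nat_eq_Gamma_mul_cpoch (ne_neg_natCast_of_re_pos hu)] at hB
  rw [div_mul_div_comm, eq_div_iff hne]
  linear_combination -hB

lemma integral_mul_pow_eq_betaIntegral_add_nat (u v : ℂ) (n : ℕ) :
    ∫ t in (0 : ℝ)..1, (t : ℂ) ^ (u - 1) * (1 - t) ^ (v - 1) * (t : ℂ) ^ n =
      betaIntegral (u + n) v := by
  refine integral_congr_ae (Filter.Eventually.of_forall fun t ht ↦ ?_)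
  have ht0 : (t : ℂ) ≠ 0 := ofReal_ne_zero.2 (Set.uIoc_of_le (zero_le_one (α := ℝ)) ▸ ht).1.ne'
  rw [mul_right_comm, ← cpow_natCast, ← cpow_add _ _ ht0, sub_add_eq_add_sub]

lemma integral_mul_tsum_pow {f : ℝ → ℂ} (hf : IntervalIntegrable f volume 0 1) {c : ℕ → ℂ}
    (hc : Summable fun n ↦ ‖c n‖) :
    ∫ t in (0 : ℝ)..1, f t * ∑' n, c n * (t : ℂ) ^ n =
      ∑' n, c n * ∫ t in (0 : ℝ)..1, f t * (t : ℂ) ^ n := by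
  have hint : ∀ n, IntervalIntegrable (fun t : ℝ ↦ c n * (f t * (t : ℂ) ^ n)) volume 0 1 :=
    fun n ↦ (hf.mul_continuousOn (g := fun t : ℝ ↦ (t : ℂ) ^ n) (by fun_prop)).const_mul (c n)
  have hbound : ∀ n, ∫ t in Set.Ioc (0 : ℝ) 1, ‖c n * (f t * (t : ℂ) ^ n)‖ ≤
      ‖c n‖ * ∫ t in Set.Ioc (0 : ℝ) 1, ‖f t‖ := by
    intro n
    rw [← MeasureTheory.integral_const_mul]
    refine setIntegral_mono_on (hint n).1.norm (hf.1.norm.const_mul _) measurableSet_Ioc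
      fun t ht ↦ ?_
    rw [norm_mul, norm_mul, norm_pow, norm_real, Real.norm_of_nonneg ht.1.le]
    gcongr
    exact mul_le_of_le_one_right (norm_nonneg _) (pow_le_one₀ ht.1.le ht.2)
  simp_rw [intervalIntegral.integral_of_le zero_le_one, ← MeasureTheory.integral_const_mul,
    ← tsum_mul_left, mul_left_comm (f _)]
  exact (integral_tsum_of_summable_integral_norm (fun n ↦ (hint n).1)
    (.of_nonneg_of_le (fun n ↦ integral_nonneg fun _ ↦ norm_nonneg _) hbound
      (hc.mul_right _))).symm

theorem stmt2 (a b c z : ℂ) (hz : ‖z‖ < 1) (hb : 0 < b.re) (hbc : b.re < c.re) :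
    hyp2F1 a b c z =
      Complex.Gamma c / (Complex.Gamma b * Complex.Gamma (c - b)) *
        ∫ t in (0:ℝ)..1,
          (t : ℂ) ^ (b - 1) * ((1 : ℂ) - t) ^ (c - b - 1) * ((1 : ℂ) - z * t) ^ (-a) := by
  have hcb : 0 < (c - b).re := by rwa [sub_re, sub_pos]
  have hexpand : ∀ t ∈ Set.uIcc (0 : ℝ) 1, (t : ℂ) ^ (b - 1) * (1 - t) ^ (c - b - 1) *
      (1 - z * t) ^ (-a) = (t : ℂ) ^ (b - 1) * (1 - t) ^ (c - b - 1) *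
        ∑' n, cpoch a n / n ! * z ^ n * (t : ℂ) ^ n := by
    intro t ht
    rw [Set.uIcc_of_le zero_le_one] at ht
    have hzt : ‖z * t‖ < 1 := by
      rw [norm_mul, norm_real, Real.norm_of_nonneg ht.1]
      exact (mul_le_of_le_one_right (norm_nonneg z) ht.2).trans_lt hz
    simp_rw [mul_assoc _ (z ^ _), ← mul_pow, (hasSum_cpoch_div_factorial_mul_pow hzt).tsum_eq]
  rw [integral_congr hexpand, integral_mul_tsum_pow (betaIntegral_convergent hb hcb)
    (summable_norm_cpoch_div_factorial_mul_pow hz), hyp2F1, ← tsum_mul_left]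
  congr 1 with n
  rw [integral_mul_pow_eq_betaIntegral_add_nat, betaIntegral_add_nat hb hcb, add_sub_cancel]
  have hΓb := Gamma_ne_zero_of_re_pos hb
  have hΓcb := Gamma_ne_zero_of_re_pos hcb
  have hΓc := Gamma_ne_zero_of_re_pos (hb.trans hbc)
  field_simp
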